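/- Let n ≥ 1 and let D, D₀ be self-adjoint n×n complex matrices with D - D₀ =: V. Set f(t) = t(1+t²)^{-1/2}. Then ‖f(D) - f(D₀)‖ ≤ C‖V‖ for an absolute constant C independent of n, D, D₀, where ‖·‖ is the operator norm and f(D) is defined by the spectral theorem. -/

import Mathlib

/-!
For self-adjoint `a`, `f(a) = π⁻¹ ∫ a (1 + s² + a²)⁻¹ ds` over `s ∈ ℝ`, because
`∫ (c + s²)⁻¹ ds = π / √c`. With `u = c + a²` and `v = c + b²`, the resolvent-type identity
`a u⁻¹ - b v⁻¹ = c u⁻¹ (a - b) v⁻¹ + (a u⁻¹) (b - a) (b v⁻¹)`, together with `‖u⁻¹‖ ≤ c⁻¹` and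
`‖a u⁻¹‖ ≤ (2√c)⁻¹` (functional calculus), bounds the integrand's Lipschitz constant by
`(1 + 1/4) c⁻¹`. Integrating over `c = 1 + s²` gives `‖f(a) - f(b)‖ ≤ 5/4 ‖a - b‖` in every
unital C⋆-algebra.
-/

open Real MeasureTheory
open scoped Ring

theorem Commute.ringInverse_right {M₀ : Type*} [MonoidWithZero M₀] {a b : M₀}
    (h : Commute a b) : Commute a b⁻¹ʳ := by
  by_cases hb : IsUnit b
  · calc a * b⁻¹ʳ = b⁻¹ʳ * (b * a) * b⁻¹ʳ := by
          rw [← mul_assoc, Ring.inverse_mul_cancel _ hb, one_mul]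
      _ = b⁻¹ʳ * a := by
          rw [← h.eq, mul_assoc, mul_assoc, Ring.mul_inverse_cancel _ hb, mul_one]
  · simp [Ring.inverse_non_unit _ hb]

theorem mul_ringInverse_sub_mul_ringInverse {R : Type*} [Ring R] {a b u v : R}
    (hu : IsUnit u) (hv : IsUnit v) (hau : Commute a u) :
    a * u⁻¹ʳ - b * v⁻¹ʳ = u⁻¹ʳ * (a * v - u * b) * v⁻¹ʳ := by
  rw [mul_sub, sub_mul, (hau.ringInverse_right).eq, mul_assoc, mul_assoc,
    Ring.mul_inverse_cancel _ hv, mul_one, ← mul_assoc, Ring.inverse_mul_cancel _ hu, one_mul]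

theorem mul_ringInverse_algebraMap_add_sq_sub {𝕜 R : Type*} [CommRing 𝕜] [Ring R] [Algebra 𝕜 R]
    {a b : R} {c : 𝕜} (ha : IsUnit (algebraMap 𝕜 R c + a ^ 2))
    (hb : IsUnit (algebraMap 𝕜 R c + b ^ 2)) :
    a * (algebraMap 𝕜 R c + a ^ 2)⁻¹ʳ - b * (algebraMap 𝕜 R c + b ^ 2)⁻¹ʳ =
      c • ((algebraMap 𝕜 R c + a ^ 2)⁻¹ʳ * (a - b) * (algebraMap 𝕜 R c + b ^ 2)⁻¹ʳ) +
        a * (algebraMap 𝕜 R c + a ^ 2)⁻¹ʳ * (b - a) * (b * (algebraMap 𝕜 R c + b ^ 2)⁻¹ʳ) := by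
  set u := algebraMap 𝕜 R c + a ^ 2
  set v := algebraMap 𝕜 R c + b ^ 2
  have hau : Commute a u := (Algebra.commute_algebraMap_right c a).add_right (Commute.self_pow a 2)
  rw [mul_ringInverse_sub_mul_ringInverse ha hb hau, (hau.ringInverse_right).eq]
  simp only [u, v, mul_add, add_mul, mul_sub, sub_mul, Algebra.smul_def, mul_assoc,
    Algebra.commutes c]
  noncomm_ring

theorem integral_inv_add_sq {c : ℝ} (hc : 0 < c) : ∫ s : ℝ, (c + s ^ 2)⁻¹ = π / √c := by
  have hsc : 0 < √c := sqrt_pos.mpr hc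
  have hscale : ∀ s : ℝ, (c + s ^ 2)⁻¹ = c⁻¹ * (1 + (s / √c) ^ 2)⁻¹ := fun s => by
    rw [div_pow, sq_sqrt hc.le]; field_simp
  simp_rw [hscale]
  rw [integral_const_mul, Measure.integral_comp_div (fun s => (1 + s ^ 2)⁻¹),
    integral_univ_inv_one_add_sq, abs_of_pos hsc, smul_eq_mul]
  nth_rw 1 [← sq_sqrt hc.le]
  field_simp

theorem integral_mul_inv_one_add_sq_add_sq (t : ℝ) :
    ∫ s : ℝ, t * (1 + s ^ 2 + t ^ 2)⁻¹ = π * (t / √(1 + t ^ 2)) := by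
  have hreorder : ∀ s : ℝ, 1 + s ^ 2 + t ^ 2 = (1 + t ^ 2) + s ^ 2 := fun s => by ring
  simp_rw [hreorder]
  rw [integral_const_mul, integral_inv_add_sq (by positivity)]
  ring

theorem abs_inv_add_sq_le {c : ℝ} (hc : 0 < c) (t : ℝ) : |(c + t ^ 2)⁻¹| ≤ c⁻¹ := by
  rw [abs_of_pos (by positivity)]
  exact inv_anti₀ hc (by nlinarith [sq_nonneg t])

theorem abs_mul_inv_add_sq_le {c : ℝ} (hc : 0 < c) (t : ℝ) :
    |t * (c + t ^ 2)⁻¹| ≤ (2 * √c)⁻¹ := by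
  have amgm : 2 * √c * |t| ≤ c + t ^ 2 := by
    nlinarith [sq_nonneg (√c - |t|), sq_sqrt hc.le, sq_abs t]
  rw [abs_mul, abs_of_pos (inv_pos.mpr (by positivity : 0 < c + t ^ 2)), ← div_eq_mul_inv,
    div_le_iff₀ (by positivity), inv_mul_eq_div, le_div_iff₀ (by positivity)]
  linarith

theorem continuous_uncurry_mul_inv_one_add_sq_add_sq :
    Continuous (Function.uncurry fun s t : ℝ => t * (1 + s ^ 2 + t ^ 2)⁻¹) := by
  simp only [Function.uncurry_def]
  exact continuous_snd.mul ((by fun_prop : Continuous fun p : ℝ × ℝ => 1 + p.1 ^ 2 + p.2 ^ 2).inv₀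
    fun p => by positivity)

variable {A : Type*} [CStarAlgebra A]

theorem IsSelfAdjoint.cfc_const_add_sq {a : A} (ha : IsSelfAdjoint a) (c : ℝ) :
    cfc (fun t : ℝ => c + t ^ 2) a = algebraMap ℝ A c + a ^ 2 := by
  rw [cfc_const_add c (fun t : ℝ => t ^ 2) a, cfc_pow_id a 2]

theorem IsSelfAdjoint.isUnit_algebraMap_add_sq {a : A} (ha : IsSelfAdjoint a) {c : ℝ}
    (hc : 0 < c) : IsUnit (algebraMap ℝ A c + a ^ 2) := by
  rw [← ha.cfc_const_add_sq]
  exact (isUnit_cfc_iff _ a).mpr fun t _ => by positivity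

theorem IsSelfAdjoint.cfc_inv_const_add_sq {a : A} (ha : IsSelfAdjoint a) {c : ℝ} (hc : 0 < c) :
    cfc (fun t : ℝ => (c + t ^ 2)⁻¹) a = (algebraMap ℝ A c + a ^ 2)⁻¹ʳ := by
  rw [← ha.cfc_const_add_sq]
  exact cfc_inv _ _ fun t _ => by positivity

theorem IsSelfAdjoint.cfc_mul_inv_const_add_sq {a : A} (ha : IsSelfAdjoint a) {c : ℝ}
    (hc : 0 < c) :
    cfc (fun t : ℝ => t * (c + t ^ 2)⁻¹) a = a * (algebraMap ℝ A c + a ^ 2)⁻¹ʳ := by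
  rw [cfc_mul (fun t : ℝ => t) _ a (hg := by fun_prop (disch := intros; positivity)),
    cfc_id' ℝ a, ha.cfc_inv_const_add_sq hc]

theorem IsSelfAdjoint.norm_ringInverse_algebraMap_add_sq_le {a : A} (ha : IsSelfAdjoint a)
    {c : ℝ} (hc : 0 < c) : ‖(algebraMap ℝ A c + a ^ 2)⁻¹ʳ‖ ≤ c⁻¹ := by
  rw [← ha.cfc_inv_const_add_sq hc]
  exact norm_cfc_le (by positivity) fun t _ => abs_inv_add_sq_le hc t

theorem IsSelfAdjoint.norm_mul_ringInverse_algebraMap_add_sq_le {a : A} (ha : IsSelfAdjoint a)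
    {c : ℝ} (hc : 0 < c) : ‖a * (algebraMap ℝ A c + a ^ 2)⁻¹ʳ‖ ≤ (2 * √c)⁻¹ := by
  rw [← ha.cfc_mul_inv_const_add_sq hc]
  exact norm_cfc_le (by positivity) fun t _ => abs_mul_inv_add_sq_le hc t

theorem IsSelfAdjoint.norm_mul_ringInverse_algebraMap_add_sq_sub_le {a b : A}
    (ha : IsSelfAdjoint a) (hb : IsSelfAdjoint b) {c : ℝ} (hc : 0 < c) :
    ‖a * (algebraMap ℝ A c + a ^ 2)⁻¹ʳ - b * (algebraMap ℝ A c + b ^ 2)⁻¹ʳ‖ ≤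
      5 / 4 * c⁻¹ * ‖a - b‖ := by
  set u := algebraMap ℝ A c + a ^ 2
  set v := algebraMap ℝ A c + b ^ 2
  rw [mul_ringInverse_algebraMap_add_sq_sub (ha.isUnit_algebraMap_add_sq hc)
    (hb.isUnit_algebraMap_add_sq hc)]
  calc _ ≤ ‖c • (u⁻¹ʳ * (a - b) * v⁻¹ʳ)‖ + ‖a * u⁻¹ʳ * (b - a) * (b * v⁻¹ʳ)‖ := norm_add_le _ _
    _ ≤ c * (c⁻¹ * ‖a - b‖ * c⁻¹) + (2 * √c)⁻¹ * ‖b - a‖ * (2 * √c)⁻¹ := by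
        rw [norm_smul, Real.norm_of_nonneg hc.le]
        gcongr
        · refine (norm_mul_le _ _).trans ?_
          gcongr
          · refine (norm_mul_le _ _).trans ?_
            gcongr
            exact ha.norm_ringInverse_algebraMap_add_sq_le hc
          · exact hb.norm_ringInverse_algebraMap_add_sq_le hc
        · refine (norm_mul_le _ _).trans ?_
          gcongr
          refine (norm_mul_le _ _).trans ?_
          gcongr
          · exact ha.norm_mul_ringInverse_algebraMap_add_sq_le hc
          · exact hb.norm_mul_ringInverse_algebraMap_add_sq_le hc
    _ = 5 / 4 * c⁻¹ * ‖a - b‖ := by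
        rw [norm_sub_rev b a]
        field_simp
        rw [sq_sqrt hc.le]
        ring

theorem spectrum.norm_mul_inv_one_add_sq_add_sq_le {a : A} {z : ℝ} (hz : z ∈ spectrum ℝ a)
    (s : ℝ) : ‖z * (1 + s ^ 2 + z ^ 2)⁻¹‖ ≤ ‖a‖ * ‖(1 : A)‖ * (1 + s ^ 2)⁻¹ := by
  rw [Real.norm_eq_abs, abs_mul]
  exact mul_le_mul (by simpa using norm_le_norm_mul_of_mem hz)
    (abs_inv_add_sq_le (by positivity) z) (abs_nonneg _) (by positivity)

theorem IsSelfAdjoint.integrable_cfc_mul_inv_one_add_sq_add_sq {a : A} (ha : IsSelfAdjoint a) :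
    Integrable fun s : ℝ => cfc (fun t : ℝ => t * (1 + s ^ 2 + t ^ 2)⁻¹) a :=
  integrable_cfc _ (fun s => ‖a‖ * ‖(1 : A)‖ * (1 + s ^ 2)⁻¹) a
    continuous_uncurry_mul_inv_one_add_sq_add_sq.continuousOn
    (.of_forall fun s _ hz => spectrum.norm_mul_inv_one_add_sq_add_sq_le hz s)
    (integrable_inv_one_add_sq.const_mul _).hasFiniteIntegral

theorem IsSelfAdjoint.cfc_div_sqrt_one_add_sq_eq_integral {a : A} (ha : IsSelfAdjoint a) :
    cfc (fun t : ℝ => t / √(1 + t ^ 2)) a =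
      π⁻¹ • ∫ s : ℝ, cfc (fun t : ℝ => t * (1 + s ^ 2 + t ^ 2)⁻¹) a := by
  have hf : Continuous fun t : ℝ => t / √(1 + t ^ 2) := by
    fun_prop (disch := intro; positivity)
  calc cfc (fun t : ℝ => t / √(1 + t ^ 2)) a
      = π⁻¹ • cfc (fun t : ℝ => π * (t / √(1 + t ^ 2))) a := by
        rw [cfc_const_mul π _ a hf.continuousOn, smul_smul, inv_mul_cancel₀ pi_ne_zero, one_smul]
    _ = π⁻¹ • cfc (fun t : ℝ => ∫ s : ℝ, t * (1 + s ^ 2 + t ^ 2)⁻¹) a := by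
        simp_rw [integral_mul_inv_one_add_sq_add_sq]
    _ = _ := by
        rw [cfc_integral _ (fun s => ‖a‖ * ‖(1 : A)‖ * (1 + s ^ 2)⁻¹) a
          continuous_uncurry_mul_inv_one_add_sq_add_sq.continuousOn
          (.of_forall fun s _ hz => spectrum.norm_mul_inv_one_add_sq_add_sq_le hz s)
          (integrable_inv_one_add_sq.const_mul _).hasFiniteIntegral]

theorem IsSelfAdjoint.norm_cfc_div_sqrt_one_add_sq_sub_le {a b : A} (ha : IsSelfAdjoint a)
    (hb : IsSelfAdjoint b) :
    ‖cfc (fun t : ℝ => t / √(1 + t ^ 2)) a - cfc (fun t : ℝ => t / √(1 + t ^ 2)) b‖ ≤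
      5 / 4 * ‖a - b‖ := by
  rw [ha.cfc_div_sqrt_one_add_sq_eq_integral, hb.cfc_div_sqrt_one_add_sq_eq_integral, ← smul_sub,
    ← integral_sub ha.integrable_cfc_mul_inv_one_add_sq_add_sq
      hb.integrable_cfc_mul_inv_one_add_sq_add_sq, norm_smul, norm_inv, norm_of_nonneg pi_pos.le]
  have hbound : ∀ s : ℝ, ‖cfc (fun t : ℝ => t * (1 + s ^ 2 + t ^ 2)⁻¹) a -
      cfc (fun t : ℝ => t * (1 + s ^ 2 + t ^ 2)⁻¹) b‖ ≤ 5 / 4 * ‖a - b‖ * (1 + s ^ 2)⁻¹ := by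
    intro s
    have hc : (0 : ℝ) < 1 + s ^ 2 := by positivity
    rw [ha.cfc_mul_inv_const_add_sq hc, hb.cfc_mul_inv_const_add_sq hc]
    exact (ha.norm_mul_ringInverse_algebraMap_add_sq_sub_le hb hc).trans_eq (by ring)
  calc π⁻¹ * ‖∫ s : ℝ, (cfc (fun t : ℝ => t * (1 + s ^ 2 + t ^ 2)⁻¹) a -
        cfc (fun t : ℝ => t * (1 + s ^ 2 + t ^ 2)⁻¹) b)‖
      ≤ π⁻¹ * ∫ s : ℝ, 5 / 4 * ‖a - b‖ * (1 + s ^ 2)⁻¹ := by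
        gcongr
        exact norm_integral_le_of_norm_le (integrable_inv_one_add_sq.const_mul _)
          (.of_forall hbound)
    _ = 5 / 4 * ‖a - b‖ := by
        rw [integral_const_mul, integral_univ_inv_one_add_sq]
        field_simp

/-- There is an absolute constant `C > 0` such that for every `n ≥ 1` and all
self-adjoint operators `D, D₀` on `ℂⁿ`, with `f(t) = t(1+t²)^{-1/2}` applied via the
functional calculus, `‖f(D) - f(D₀)‖ ≤ C ‖D - D₀‖` in the operator norm. -/
theorem stmt19 :
    ∃ C : ℝ, 0 < C ∧
      ∀ (n : ℕ), 1 ≤ n →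
        ∀ (D D₀ : EuclideanSpace ℂ (Fin n) →L[ℂ] EuclideanSpace ℂ (Fin n)),
          IsSelfAdjoint D → IsSelfAdjoint D₀ →
            ‖cfc (fun t : ℝ => t / Real.sqrt (1 + t ^ 2)) D -
                cfc (fun t : ℝ => t / Real.sqrt (1 + t ^ 2)) D₀‖ ≤ C * ‖D - D₀‖ :=
  ⟨5 / 4, by norm_num, fun _ _ _ _ hD hD₀ => hD.norm_cfc_div_sqrt_one_add_sq_sub_le hD₀⟩
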